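/- Let μ ≥ 0 and λ ≥ 0 be integers. Then the sequence m ↦ 𝖬_m^{(μ)}(λ) is non-increasing on {m ∈ ℕ : m ≥ λ}, i.e. 𝖬_{m+1}^{(μ)}(λ) ≤ 𝖬_m^{(μ)}(λ) for every integer m ≥ λ; moreover the inequality is strict whenever λ + μ ≥ 1. -/
import Mathlib


open MeasureTheory

/-- Jacobi polynomial `P_n^{(α,β)}` with nonnegative integer parameters, as a real-valued
function. -/
noncomputable def jacobiP (α β n : ℕ) (x : ℝ) : ℝ :=
  ∑ s ∈ Finset.range (n + 1),
    (Nat.choose (n + α) (n - s) : ℝ) * (Nat.choose (n + β) s : ℝ) *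
      ((x - 1) / 2) ^ s * ((x + 1) / 2) ^ (n - s)

/-- The coefficient `𝖬_m^{(μ)}(λ)` appearing in the closed formula for the Fourier
coefficients of the conformal cubic wave equation in Hopf coordinates. -/
noncomputable def Mch (μ m l : ℕ) : ℝ :=
  (1 / (2 * Real.pi ^ ((3:ℝ) / 2))) *
    ((4 * (l:ℝ) + 4 * (μ:ℝ) + 1) * Real.Gamma ((l:ℝ) + 1/2) * Real.Gamma (2 * (μ:ℝ) + 1/2) *
        Real.Gamma ((l:ℝ) + (μ:ℝ) + 1/2) /
      (Real.Gamma ((l:ℝ) + (μ:ℝ) + 1) * Real.Gamma ((l:ℝ) + 2 * (μ:ℝ) + 1))) *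
    ((2 * (μ:ℝ) + 2 * (m:ℝ) + 1) * Real.Gamma ((m:ℝ) - (l:ℝ) + 1/2) *
        Real.Gamma ((m:ℝ) + (l:ℝ) + 2 * (μ:ℝ) + 1) /
      (Real.Gamma ((m:ℝ) - (l:ℝ) + 1) * Real.Gamma ((m:ℝ) + (l:ℝ) + 2 * (μ:ℝ) + 3/2)))

/-- The coefficient `ξ_λ(μ)`. -/
noncomputable def xiCH (μ l : ℕ) : ℝ :=
  Real.pi * (2:ℝ) ^ ((1:ℝ) - 4 * (μ:ℝ)) * Real.Gamma (2 * (l:ℝ) + 4 * (μ:ℝ) + 1) /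
    ((4 * (l:ℝ) + 4 * (μ:ℝ) + 1) * Real.Gamma (2 * (l:ℝ) + 1) *
      Real.Gamma (2 * (μ:ℝ) + 1/2) ^ 2)

/-- The normalization constant `𝖭_n^{(μ)}`. -/
noncomputable def Nch (μ n : ℕ) : ℝ :=
  Real.sqrt ((2 * (n:ℝ) + 1 + 2 * (μ:ℝ)) * (2:ℝ) ^ (-(2:ℝ) * (μ:ℝ)) *
      Real.Gamma ((n:ℝ) + 1) * Real.Gamma ((n:ℝ) + 2 * (μ:ℝ) + 1) /
    Real.Gamma ((n:ℝ) + (μ:ℝ) + 1) ^ 2)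

/-- The normalized Fourier coefficient `𝖢_{aabb}^{(μ,μ)}`. -/
noncomputable def CHcoef (μ a b : ℕ) : ℝ :=
  (1/2) * (Nch μ a) ^ 2 * (Nch μ b) ^ 2 *
    ∫ x in (-1:ℝ)..1,
      (1 - x) ^ (2 * μ) * (1 + x) ^ (2 * μ) * (jacobiP μ μ a x) ^ 2 * (jacobiP μ μ b x) ^ 2

/-- Monotonicity of `m ↦ 𝖬_m^{(μ)}(λ)` on `m ≥ λ`, strict when `λ + μ ≥ 1`. -/
theorem Mch_antitone (μ l m : ℕ) (h : l ≤ m) :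
    Mch μ (m + 1) l ≤ Mch μ m l ∧ (1 ≤ l + μ → Mch μ (m + 1) l < Mch μ m l) := by
  have hlm : (l:ℝ) ≤ (m:ℝ) := by exact_mod_cast h
  set x : ℝ := (m:ℝ) - (l:ℝ) with hxdef
  set y : ℝ := (m:ℝ) + (l:ℝ) + 2*(μ:ℝ) with hydef
  have hx : 0 ≤ x := by rw [hxdef]; linarith
  have hy : 0 ≤ y := by rw [hydef]; positivity
  have g1 : 0 < Real.Gamma (x + 1/2) := Real.Gamma_pos_of_pos (by linarith)
  have g2 : 0 < Real.Gamma (y + 1) := Real.Gamma_pos_of_pos (by linarith)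
  have g3 : 0 < Real.Gamma (x + 1) := Real.Gamma_pos_of_pos (by linarith)
  have g4 : 0 < Real.Gamma (y + 3/2) := Real.Gamma_pos_of_pos (by linarith)
  have c1 : 0 < Real.Gamma ((l:ℝ) + 1/2) := Real.Gamma_pos_of_pos (by positivity)
  have c2 : 0 < Real.Gamma (2*(μ:ℝ) + 1/2) := Real.Gamma_pos_of_pos (by positivity)
  have c3 : 0 < Real.Gamma ((l:ℝ) + (μ:ℝ) + 1/2) := Real.Gamma_pos_of_pos (by positivity)
  have c4 : 0 < Real.Gamma ((l:ℝ) + (μ:ℝ) + 1) := Real.Gamma_pos_of_pos (by positivity)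
  have c5 : 0 < Real.Gamma ((l:ℝ) + 2*(μ:ℝ) + 1) := Real.Gamma_pos_of_pos (by positivity)
  set C : ℝ := (1 / (2 * Real.pi ^ ((3:ℝ) / 2))) *
    ((4 * (l:ℝ) + 4 * (μ:ℝ) + 1) * Real.Gamma ((l:ℝ) + 1/2) * Real.Gamma (2 * (μ:ℝ) + 1/2) *
        Real.Gamma ((l:ℝ) + (μ:ℝ) + 1/2) /
      (Real.Gamma ((l:ℝ) + (μ:ℝ) + 1) * Real.Gamma ((l:ℝ) + 2 * (μ:ℝ) + 1))) with hCdef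
  have hpi : (0:ℝ) < Real.pi ^ ((3:ℝ)/2) := Real.rpow_pos_of_pos Real.pi_pos _
  have hC : 0 < C := by
    rw [hCdef]
    have h1 : (0:ℝ) < 4 * (l:ℝ) + 4 * (μ:ℝ) + 1 := by positivity
    positivity
  have hB : Mch μ m l = C * ((2 * (μ:ℝ) + 2 * (m:ℝ) + 1) * Real.Gamma (x + 1/2) *
      Real.Gamma (y + 1) / (Real.Gamma (x + 1) * Real.Gamma (y + 3/2))) := by
    rw [Mch, hCdef]
  have hA : Mch μ (m+1) l = C * ((2 * (μ:ℝ) + 2 * (m:ℝ) + 3) *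
      ((x + 1/2) * Real.Gamma (x + 1/2)) * ((y + 1) * Real.Gamma (y + 1)) /
      (((x + 1) * Real.Gamma (x + 1)) * ((y + 3/2) * Real.Gamma (y + 3/2)))) := by
    rw [Mch, hCdef, Nat.cast_add, Nat.cast_one]
    rw [show (m:ℝ) + 1 - (l:ℝ) + 1/2 = (x + 1/2) + 1 by rw [hxdef]; ring,
        show (m:ℝ) + 1 + (l:ℝ) + 2*(μ:ℝ) + 1 = (y + 1) + 1 by rw [hydef]; ring,
        show (m:ℝ) + 1 - (l:ℝ) + 1 = (x + 1) + 1 by rw [hxdef]; ring,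
        show (m:ℝ) + 1 + (l:ℝ) + 2*(μ:ℝ) + 3/2 = (y + 3/2) + 1 by rw [hydef]; ring]
    rw [Real.Gamma_add_one (s := x + 1/2) (ne_of_gt (by linarith)),
        Real.Gamma_add_one (s := y + 1) (ne_of_gt (by linarith)),
        Real.Gamma_add_one (s := x + 1) (ne_of_gt (by linarith)),
        Real.Gamma_add_one (s := y + 3/2) (ne_of_gt (by linarith))]
    ring
  set num : ℝ := (2 * (μ:ℝ) + 2 * (m:ℝ) + 3) * (x + 1/2) * (y + 1) with hnum
  set den : ℝ := (2 * (μ:ℝ) + 2 * (m:ℝ) + 1) * (x + 1) * (y + 3/2) with hden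
  have hdenpos : 0 < den := by rw [hden]; positivity
  have hMpos : 0 < Mch μ m l := by
    rw [hB]
    have : (0:ℝ) < 2 * (μ:ℝ) + 2 * (m:ℝ) + 1 := by positivity
    positivity
  have hD : 0 < (x + 1) * Real.Gamma (x + 1) * ((y + 3/2) * Real.Gamma (y + 3/2)) :=
    mul_pos (mul_pos (by linarith) g3) (mul_pos (by linarith) g4)
  have hD' : 0 < Real.Gamma (x + 1) * Real.Gamma (y + 3/2) := mul_pos g3 g4
  have hmul' : Mch μ (m+1) l * den = Mch μ m l * num := by
    rw [hA, hB, mul_div_assoc', mul_div_assoc', div_mul_eq_mul_div, div_mul_eq_mul_div,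
      div_eq_div_iff (ne_of_gt hD) (ne_of_gt hD')]
    rw [hnum, hden]
    ring
  have hkey : den - num = ((l:ℝ) + (μ:ℝ)) * (2 * ((l:ℝ) + (μ:ℝ)) + 1) := by
    rw [hden, hnum, hxdef, hydef]; ring
  have hs0 : (0:ℝ) ≤ (l:ℝ) + (μ:ℝ) := by positivity
  clear_value x y C num den
  have hle : num ≤ den := by
    have h2 : (0:ℝ) ≤ ((l:ℝ) + (μ:ℝ)) * (2 * ((l:ℝ) + (μ:ℝ)) + 1) :=
      mul_nonneg hs0 (by linarith)
    linarith [hkey]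
  constructor
  · have h3 : 0 ≤ Mch μ m l * (den - num) := mul_nonneg hMpos.le (sub_nonneg.2 hle)
    have h4 : (Mch μ m l - Mch μ (m+1) l) * den = Mch μ m l * (den - num) := by
      linear_combination -hmul'
    have h5 : 0 ≤ (Mch μ m l - Mch μ (m+1) l) * den := by rw [h4]; exact h3
    have h6 := div_nonneg h5 hdenpos.le
    rw [mul_div_cancel_right₀ _ (ne_of_gt hdenpos)] at h6
    linarith
  · intro hs
    have hs' : (1:ℝ) ≤ (l:ℝ) + (μ:ℝ) := by
      have : (1:ℕ) ≤ l + μ := hs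
      exact_mod_cast Nat.one_le_cast.mpr this
    have hlt : num < den := by
      have h2 : (0:ℝ) < ((l:ℝ) + (μ:ℝ)) * (2 * ((l:ℝ) + (μ:ℝ)) + 1) :=
        mul_pos (by linarith) (by linarith)
      linarith [hkey]
    have h3 : 0 < Mch μ m l * (den - num) := mul_pos hMpos (sub_pos.2 hlt)
    have h4 : (Mch μ m l - Mch μ (m+1) l) * den = Mch μ m l * (den - num) := by
      linear_combination -hmul'
    have h5 : 0 < (Mch μ m l - Mch μ (m+1) l) * den := by rw [h4]; exact h3
    have h6 := div_pos h5 hdenpos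
    rw [mul_div_cancel_right₀ _ (ne_of_gt hdenpos)] at h6
    linarith
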